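/- Let ε : ℝ → ℝ be continuous with ε(0) ∈ (-a, b), and suppose V : ℝ → ℝ defined by V(t) = V₁(ε(t)) (with V₁ the asymmetric barrier function) is nonincreasing. Then ε(t) ∈ (-a, b) for all t ≥ 0. -/
import Mathlib


open Filter Topology Set

/-- Barrier-Lyapunov invariance: if `ε` is continuous with `ε 0 ∈ (-a, b)` and
`t ↦ V₁ (ε t)` is nonincreasing on `[0, ∞)`, where `V₁` is the asymmetric
barrier function (blowing up at the endpoints), then `ε t ∈ (-a, b)` for all
`t ≥ 0`. -/
theorem stmt4 (a b : ℝ) (ha : 0 < a) (hb : 0 < b)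
    (V₁ : ℝ → ℝ)
    (hVpos : ∀ x ∈ Ico 0 b, V₁ x = Real.log (b ^ 2 / (b ^ 2 - x ^ 2)))
    (hVneg : ∀ x ∈ Ioc (-a) 0, V₁ x = Real.log (a ^ 2 / (a ^ 2 - x ^ 2)))
    (hVtop_b : Tendsto V₁ (nhdsWithin b (Iio b)) atTop)
    (hVtop_a : Tendsto V₁ (nhdsWithin (-a) (Ioi (-a))) atTop)
    (ε : ℝ → ℝ) (hε : Continuous ε)
    (hmono : AntitoneOn (fun t => V₁ (ε t)) (Ici 0))
    (h0 : ε 0 ∈ Ioo (-a) b) :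
    ∀ t ≥ (0 : ℝ), ε t ∈ Ioo (-a) b := by
  intro t ht
  by_contra hout
  have hab : -a < b := lt_trans h0.1 h0.2
  -- the set of bad times in [0, t]
  set S : Set ℝ := Icc 0 t ∩ ε ⁻¹' (Ioo (-a) b)ᶜ with hS
  have hSclosed : IsClosed S :=
    isClosed_Icc.inter ((isOpen_Ioo.preimage hε).isClosed_compl)
  have hSne : S.Nonempty := ⟨t, ⟨ht, le_rfl⟩, hout⟩
  have hSbdd : BddBelow S := ⟨0, fun s hs => hs.1.1⟩
  set T := sInf S with hT
  have hTS : T ∈ S := hSclosed.csInf_mem hSne hSbdd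
  have hT0 : 0 ≤ T := hTS.1.1
  have hTpos : 0 < T := by
    rcases hT0.lt_or_eq with h | h
    · exact h
    · exact absurd h0 (by rw [← h] at hTS; exact hTS.2)
  -- before T, ε stays in (-a, b)
  have hin : ∀ s ∈ Ico (0:ℝ) T, ε s ∈ Ioo (-a) b := by
    intro s hs
    by_contra hc
    exact absurd (csInf_le hSbdd ⟨⟨hs.1, hs.2.le.trans hTS.1.2⟩, hc⟩) (not_le.mpr hs.2)
  -- the left-limit filter at T
  have hcl : T ∈ closure (Ico (0:ℝ) T) := by
    rw [closure_Ico hTpos.ne]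
    exact ⟨hT0, le_rfl⟩
  haveI hNB : (𝓝[Ico (0:ℝ) T] T).NeBot := mem_closure_iff_nhdsWithin_neBot.mp hcl
  have htend : Tendsto ε (𝓝[Ico (0:ℝ) T] T) (𝓝 (ε T)) :=
    (hε.continuousAt.continuousWithinAt).tendsto
  -- ε T is in the closed interval
  have hmem : ε T ∈ Icc (-a) b := by
    have : ε T ∈ closure (Ioo (-a) b) := by
      apply mem_closure_of_tendsto htend
      exact eventually_nhdsWithin_of_forall (fun s hs => hin s hs)
    rwa [closure_Ioo hab.ne] at this
  -- values of V along the trajectory are bounded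
  have hbound : ∀ s ∈ Ico (0:ℝ) T, V₁ (ε s) ≤ V₁ (ε 0) :=
    fun s hs => hmono (le_refl (0:ℝ)) hs.1 hs.1
  have hcontr : ∀ (c : ℝ) (I : Set ℝ), ε T = c →
      (∀ s ∈ Ico (0:ℝ) T, ε s ∈ I) →
      Tendsto V₁ (𝓝[I] c) atTop → False := by
    intro c I hc hI htop
    have h1 : Tendsto ε (𝓝[Ico (0:ℝ) T] T) (𝓝[I] c) := by
      rw [tendsto_nhdsWithin_iff]
      exact ⟨hc ▸ htend, eventually_nhdsWithin_of_forall hI⟩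
    have h2 : Tendsto (fun s => V₁ (ε s)) (𝓝[Ico (0:ℝ) T] T) atTop := htop.comp h1
    have h3 := h2.eventually_ge_atTop (V₁ (ε 0) + 1)
    have h4 : ∀ᶠ s in 𝓝[Ico (0:ℝ) T] T, V₁ (ε s) ≤ V₁ (ε 0) :=
      eventually_nhdsWithin_of_forall hbound
    obtain ⟨s, hs1, hs2⟩ := (h3.and h4).exists
    linarith
  rcases hmem.1.lt_or_eq with h1 | h1
  · rcases hmem.2.eq_or_lt with h2 | h2
    · exact hcontr b (Iio b) h2 (fun s hs => (hin s hs).2) hVtop_b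
    · exact hTS.2 ⟨h1, h2⟩
  · exact hcontr (-a) (Ioi (-a)) h1.symm (fun s hs => (hin s hs).1) hVtop_a
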